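/- arXiv:2205.12363 — 9 statements merged into one kernel-verified Lean document; each statement's English description precedes it below -/
import Mathlib

section
/- For every integer 1 ≤ i ≤ t ≤ n, the volume of the q-ary Hamming ball satisfies V_q(n−i, t−i) ≤ (t/((q−1)n))^i · V_q(n, t), where V_q(m, r) = ∑_{j=0}^{r} C(m, j)(q−1)^j and q ≥ 2. -/
/-! Each step `(n, t) → (n + 1, t + 1)` multiplies the ball volume by at least
`(q - 1)(n + 1)/(t + 1)`: the identity `(n + 1) C(n, j) = (j + 1) C(n + 1, j + 1)` matches the
terms of `(q - 1)(n + 1) V q n t` with those of `V q (n + 1) (t + 1)` weighted by their radius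
`j + 1 ≤ t + 1`. Since `t ≤ n`, the step factors `(t + k)/((q - 1)(n + k))` increase with `k`,
so iterating `i` steps costs at most the `i`-th power of the last one. -/

/-- Volume of the q-ary Hamming ball of radius `r` in dimension `m`. -/
def V (q m r : ℕ) : ℕ := ∑ j ∈ Finset.range (r + 1), Nat.choose m j * (q - 1) ^ j

lemma mul_V_le_mul_V_succ (q n t : ℕ) :
    (q - 1) * (n + 1) * V q n t ≤ (t + 1) * V q (n + 1) (t + 1) := by
  have hterm : ∀ j, (q - 1) * (n + 1) * (n.choose j * (q - 1) ^ j)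
      = (j + 1) * ((n + 1).choose (j + 1) * (q - 1) ^ (j + 1)) := by
    intro j
    calc (q - 1) * (n + 1) * (n.choose j * (q - 1) ^ j)
        = (n + 1) * n.choose j * ((q - 1) ^ j * (q - 1)) := by ring
      _ = (j + 1) * ((n + 1).choose (j + 1) * (q - 1) ^ (j + 1)) := by
        rw [Nat.add_one_mul_choose_eq, pow_succ]; ring
  calc (q - 1) * (n + 1) * V q n t
      = ∑ j ∈ Finset.range (t + 1), (j + 1) * ((n + 1).choose (j + 1) * (q - 1) ^ (j + 1)) := by
        simp only [V, Finset.mul_sum, hterm]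
    _ = ∑ k ∈ Finset.range (t + 2), k * ((n + 1).choose k * (q - 1) ^ k) := by
        rw [Finset.sum_range_succ' (fun k => k * ((n + 1).choose k * (q - 1) ^ k))]
        simp
    _ ≤ ∑ k ∈ Finset.range (t + 2), (t + 1) * ((n + 1).choose k * (q - 1) ^ k) := by
        gcongr with k hk
        exact Nat.lt_succ_iff.mp (Finset.mem_range.mp hk)
    _ = (t + 1) * V q (n + 1) (t + 1) := by
        rw [V, Finset.mul_sum]

lemma V_le_div_mul_V_succ (q n t : ℕ) (hq : 2 ≤ q) :
    (V q n t : ℚ) ≤ ((t + 1 : ℕ) : ℚ) / ((q - 1) * (n + 1 : ℕ)) * V q (n + 1) (t + 1) := by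
  have hq1 : (0 : ℚ) < q - 1 := by
    have : (2 : ℚ) ≤ q := by exact_mod_cast hq
    linarith
  rw [div_mul_eq_mul_div, le_div_iff₀ (by positivity)]
  have h : (((q - 1) * (n + 1) * V q n t : ℕ) : ℚ) ≤ ((t + 1) * V q (n + 1) (t + 1) : ℕ) :=
    Nat.cast_le.mpr (mul_V_le_mul_V_succ q n t)
  push_cast [Nat.cast_sub (by omega : 1 ≤ q)] at h ⊢
  linarith

lemma div_mul_le_div_mul_succ {c : ℚ} (hc : 0 ≤ c) {t n : ℕ} (htn : t ≤ n) :
    (t : ℚ) / (c * n) ≤ ((t + 1 : ℕ) : ℚ) / (c * (n + 1 : ℕ)) := by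
  rcases hc.eq_or_lt with rfl | hc_pos
  · simp
  rcases n.eq_zero_or_pos with rfl | hn
  · simp [Nat.le_zero.mp htn, hc]
  have htn' : (t : ℚ) ≤ n := by exact_mod_cast htn
  rw [div_le_div_iff₀ (by positivity) (by positivity)]
  push_cast
  nlinarith

lemma V_le_pow_mul_V_add (q n t : ℕ) (hq : 2 ≤ q) (htn : t ≤ n) (i : ℕ) :
    (V q n t : ℚ) ≤ (((t + i : ℕ) : ℚ) / ((q - 1) * (n + i : ℕ))) ^ i * V q (n + i) (t + i) := by
  have hq1 : (0 : ℚ) ≤ q - 1 := by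
    have : (2 : ℚ) ≤ q := by exact_mod_cast hq
    linarith
  induction i with
  | zero => simp
  | succ i ih =>
    set r : ℕ → ℚ := fun k => ((t + k : ℕ) : ℚ) / ((q - 1) * (n + k : ℕ))
    have hr : r i ≤ r (i + 1) := div_mul_le_div_mul_succ hq1 (by omega)
    calc (V q n t : ℚ)
        ≤ r i ^ i * V q (n + i) (t + i) := ih
      _ ≤ r (i + 1) ^ i * (r (i + 1) * V q (n + i + 1) (t + i + 1)) := by
        gcongr
        exact V_le_div_mul_V_succ q (n + i) (t + i) hq
      _ = r (i + 1) ^ (i + 1) * V q (n + (i + 1)) (t + (i + 1)) := by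
        rw [pow_succ, mul_assoc]; rfl

theorem stmt0_general (q n t i : ℕ) (hq : 2 ≤ q) (hit : i ≤ t) (htn : t ≤ n) :
    (V q (n - i) (t - i) : ℚ) ≤ ((t : ℚ) / ((q - 1) * n)) ^ i * V q n t := by
  obtain ⟨t, rfl⟩ := Nat.exists_eq_add_of_le' hit
  obtain ⟨n, rfl⟩ := Nat.exists_eq_add_of_le' (hit.trans htn)
  simpa using V_le_pow_mul_V_add q n t hq (by omega) i

theorem stmt0 (q n t i : ℕ) (hq : 2 ≤ q) (hi : 1 ≤ i) (hit : i ≤ t) (htn : t ≤ n) :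
    (V q (n - i) (t - i) : ℚ) ≤ ((t : ℚ) / ((q - 1) * n)) ^ i * V q n t :=
  stmt0_general q n t i hq hit htn
end

section
/- For integers m ≥ 1 and r ≥ 1 with r ≤ m, V_q(m−1, r−1)/V_q(m, r) ≤ r/((q−1)m); equivalently, (q−1)·m·V_q(m−1, r−1) ≤ r·V_q(m, r). -/
open Finset

theorem Nat.mul_choose_sub_one (m j : ℕ) :
    m * (m - 1).choose j = m.choose (j + 1) * (j + 1) := by
  cases m with
  | zero => simp
  | succ n => exact Nat.add_one_mul_choose_eq n j

theorem mul_V_sub_one_eq_sum (q m r : ℕ) :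
    (q - 1) * m * V q (m - 1) r =
      ∑ j ∈ range (r + 1), (j + 1) * (m.choose (j + 1) * (q - 1) ^ (j + 1)) := by
  rw [V, mul_sum]
  refine sum_congr rfl fun j _ => ?_
  calc (q - 1) * m * ((m - 1).choose j * (q - 1) ^ j)
      = m * (m - 1).choose j * (q - 1) ^ (j + 1) := by ring
    _ = (j + 1) * (m.choose (j + 1) * (q - 1) ^ (j + 1)) := by
      rw [Nat.mul_choose_sub_one]; ring

theorem sum_choose_succ_le_V (q m r : ℕ) :
    ∑ j ∈ range (r + 1), m.choose (j + 1) * (q - 1) ^ (j + 1) ≤ V q m (r + 1) := by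
  rw [V, sum_range_succ' _ (r + 1)]
  exact Nat.le_add_right _ _

theorem mul_V_sub_one_le (q m r : ℕ) :
    (q - 1) * m * V q (m - 1) r ≤ (r + 1) * V q m (r + 1) :=
  calc (q - 1) * m * V q (m - 1) r
      = ∑ j ∈ range (r + 1), (j + 1) * (m.choose (j + 1) * (q - 1) ^ (j + 1)) :=
        mul_V_sub_one_eq_sum q m r
    _ ≤ ∑ j ∈ range (r + 1), (r + 1) * (m.choose (j + 1) * (q - 1) ^ (j + 1)) :=
        sum_le_sum fun j hj => Nat.mul_le_mul_right _ (mem_range.mp hj)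
    _ = (r + 1) * ∑ j ∈ range (r + 1), m.choose (j + 1) * (q - 1) ^ (j + 1) := by
        rw [mul_sum]
    _ ≤ (r + 1) * V q m (r + 1) := Nat.mul_le_mul_left _ (sum_choose_succ_le_V q m r)

theorem stmt1_general (q m r : ℕ) (hr : 1 ≤ r) :
    (q - 1) * m * V q (m - 1) (r - 1) ≤ r * V q m r := by
  obtain ⟨r, rfl⟩ := Nat.exists_eq_add_of_le' hr
  exact mul_V_sub_one_le q m r

theorem stmt1 (q m r : ℕ) (hq : 2 ≤ q) (hr : 1 ≤ r) (hrm : r ≤ m) :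
    (q - 1) * m * V q (m - 1) (r - 1) ≤ r * V q m r :=
  stmt1_general q m r hr
end

section
/- For integers 1 ≤ α ≤ t with t + α ≤ n and α ≤ n − t, one has V_q(n, t+α) ≥ ((q−1)n/(t+α))^α · ((n−α+1−t)/(n−α+1))^α · V_q(n, t). -/
open Finset

theorem Nat.choose_add_mul_descFactorial (n j a : ℕ) :
    n.choose (j + a) * (j + a).descFactorial a = n.choose j * (n - j).descFactorial a := by
  rw [Nat.descFactorial_eq_factorial_mul_choose, Nat.descFactorial_eq_factorial_mul_choose,
    ← Nat.choose_symm_add, mul_left_comm, Nat.choose_mul (Nat.le_add_right j a),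
    Nat.add_sub_cancel_left]
  ring

theorem descFactorial_factor_le {n t a j i : ℕ} (hi : i < a) (hjt : j ≤ t) (htn : t + a ≤ n) :
    n * (n + 1 - a - t) * (j + a - i) ≤ (t + a) * (n + 1 - a) * (n - j - i) := by
  have h1 : ((n + 1 - a - t : ℕ) : ℤ) = n + 1 - a - t := by omega
  have h2 : ((n + 1 - a : ℕ) : ℤ) = n + 1 - a := by omega
  have h3 : ((n - j - i : ℕ) : ℤ) = n - j - i := by omega
  have h4 : ((j + a - i : ℕ) : ℤ) = j + a - i := by omega
  zify
  rw [h1, h2, h3, h4]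
  have hsmall : ((n : ℤ) + 1 - a - t) * (n - i) ≤ (n + 1 - a) * (n - j - i) := by
    nlinarith
  have hlarge : (n : ℤ) * (j + a - i) ≤ (t + a) * (n - i) := by
    nlinarith
  have : (0 : ℤ) ≤ n + 1 - a - t := by omega
  nlinarith [mul_le_mul_of_nonneg_right hlarge this,
    mul_le_mul_of_nonneg_left hsmall (by positivity : (0 : ℤ) ≤ t + a)]

theorem pow_mul_descFactorial_le {n t a j : ℕ} (hjt : j ≤ t) (htn : t + a ≤ n) :
    (n * (n + 1 - a - t)) ^ a * (j + a).descFactorial a ≤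
      ((t + a) * (n + 1 - a)) ^ a * (n - j).descFactorial a := by
  simp only [Nat.descFactorial_eq_prod_range, pow_eq_prod_const, ← prod_mul_distrib, Nat.sub_sub]
  refine prod_le_prod' fun i hi => ?_
  simpa only [mul_assoc, Nat.sub_sub] using descFactorial_factor_le (mem_range.1 hi) hjt htn

theorem pow_mul_choose_le_choose_add {n t a j : ℕ} (hjt : j ≤ t) (htn : t + a ≤ n) :
    (n * (n + 1 - a - t)) ^ a * n.choose j ≤ ((t + a) * (n + 1 - a)) ^ a * n.choose (j + a) := by
  refine Nat.le_of_mul_le_mul_right ?_ (Nat.descFactorial_pos.2 (Nat.le_add_left a j))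
  calc (n * (n + 1 - a - t)) ^ a * n.choose j * (j + a).descFactorial a
      ≤ ((t + a) * (n + 1 - a)) ^ a * (n - j).descFactorial a * n.choose j := by
        rw [mul_right_comm]; exact Nat.mul_le_mul_right _ (pow_mul_descFactorial_le hjt htn)
    _ = ((t + a) * (n + 1 - a)) ^ a * n.choose (j + a) * (j + a).descFactorial a := by
        rw [mul_assoc _ (n.choose (j + a)), Nat.choose_add_mul_descFactorial]; ring

theorem pow_mul_V_le_V_add (q n t a : ℕ) (htn : t + a ≤ n) :
    ((q - 1) * n * (n + 1 - a - t)) ^ a * V q n t ≤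
      ((t + a) * (n + 1 - a)) ^ a * V q n (t + a) := by
  have hshift :
      ∑ j ∈ range (t + 1), n.choose (a + j) * (q - 1) ^ (a + j) ≤ V q n (t + a) := by
    rw [V, show t + a + 1 = a + (t + 1) by omega,
      sum_range_add (fun j => n.choose j * (q - 1) ^ j)]
    exact Nat.le_add_left _ _
  calc ((q - 1) * n * (n + 1 - a - t)) ^ a * V q n t
      = ∑ j ∈ range (t + 1), (q - 1) ^ (a + j) * ((n * (n + 1 - a - t)) ^ a * n.choose j) := by
        rw [V, mul_sum]; refine sum_congr rfl fun j _ => by ring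
    _ ≤ ∑ j ∈ range (t + 1),
          (q - 1) ^ (a + j) * (((t + a) * (n + 1 - a)) ^ a * n.choose (j + a)) :=
        sum_le_sum fun j hj => Nat.mul_le_mul_left _
          (pow_mul_choose_le_choose_add (Nat.lt_succ_iff.1 (mem_range.1 hj)) htn)
    _ = ((t + a) * (n + 1 - a)) ^ a *
          ∑ j ∈ range (t + 1), n.choose (a + j) * (q - 1) ^ (a + j) := by
        rw [mul_sum]; refine sum_congr rfl fun j _ => by rw [add_comm j a]; ring
    _ ≤ ((t + a) * (n + 1 - a)) ^ a * V q n (t + a) := Nat.mul_le_mul_left _ hshift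

theorem stmt2_general (q n t α : ℕ) (hq : 2 ≤ q) (htn : t + α ≤ n) :
    (V q n (t + α) : ℚ) ≥
      (((q : ℚ) - 1) * n / (t + α)) ^ α *
        (((n : ℚ) - α + 1 - t) / ((n : ℚ) - α + 1)) ^ α * V q n t := by
  have key : ((((q - 1) * n * (n + 1 - α - t)) ^ α * V q n t : ℕ) : ℚ) ≤
      ((((t + α) * (n + 1 - α)) ^ α * V q n (t + α) : ℕ) : ℚ) :=
    Nat.cast_le.2 (pow_mul_V_le_V_add q n t α htn)
  have hgap : ((n + 1 - α - t : ℕ) : ℚ) = n - α + 1 - t := by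
    rw [Nat.sub_sub, Nat.cast_sub (by omega)]; push_cast; ring
  push_cast [hgap, Nat.cast_sub (by omega : 1 ≤ q), Nat.cast_sub (by omega : α ≤ n + 1)] at key
  rw [show (n : ℚ) + 1 - α = n - α + 1 by ring] at key
  have hden : (0 : ℚ) ≤ (t + α) * (n - α + 1) :=
    mul_nonneg (by positivity) (by linarith [(Nat.cast_le (α := ℚ)).2 (by omega : α ≤ n)])
  rw [ge_iff_le, ← mul_pow, div_mul_div_comm, div_pow, div_mul_eq_mul_div]
  exact div_le_of_le_mul₀ (pow_nonneg hden α) (Nat.cast_nonneg _) (by linarith)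

theorem stmt2 (q n t α : ℕ) (hq : 2 ≤ q) (hα : 1 ≤ α) (hαt : α ≤ t) (htn : t + α ≤ n) :
    (V q n (t + α) : ℚ) ≥
      (((q : ℚ) - 1) * n / (t + α)) ^ α *
        (((n : ℚ) - α + 1 - t) / ((n : ℚ) - α + 1)) ^ α * V q n t :=
  stmt2_general q n t α hq htn
end

section
/- For integers 0 ≤ α ≤ n and 0 ≤ t ≤ n − α, the ratio of Hamming ball volumes satisfies V_q(n−α, t)/V_q(n, t) ≥ ((n−α+1−t)/(n−α+1))^α. -/
lemma V_pos (q m r : ℕ) : 0 < V q m r :=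
  Finset.sum_pos' (fun _ _ => Nat.zero_le _) ⟨0, by simp⟩

lemma sub_mul_choose_succ_le {m t j : ℕ} (hj : j ≤ t) :
    (m + 1 - t) * (m + 1).choose j ≤ (m + 1) * m.choose j :=
  calc (m + 1 - t) * (m + 1).choose j
      ≤ (m + 1 - j) * (m + 1).choose j := Nat.mul_le_mul_right _ (by omega)
    _ = (m + 1) * m.choose j := by rw [mul_comm (m + 1 - j), ← Nat.choose_mul_succ_eq, mul_comm]

lemma sub_mul_V_succ_le (q m t : ℕ) : (m + 1 - t) * V q (m + 1) t ≤ (m + 1) * V q m t := by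
  simp only [V, Finset.mul_sum, ← mul_assoc]
  refine Finset.sum_le_sum fun j hj => Nat.mul_le_mul_right _ ?_
  exact sub_mul_choose_succ_le (Nat.lt_succ_iff.mp (Finset.mem_range.mp hj))

lemma div_mul_V_succ_le (q m t : ℕ) (ht : t ≤ m + 1) :
    ((m : ℚ) + 1 - t) / (m + 1) * V q (m + 1) t ≤ V q m t := by
  have hV : (((m + 1 - t : ℕ) : ℚ)) * V q (m + 1) t ≤ ((m + 1 : ℕ) : ℚ) * V q m t := by
    exact_mod_cast sub_mul_V_succ_le q m t
  push_cast [Nat.cast_sub ht] at hV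
  rw [div_mul_eq_mul_div, div_le_iff₀ (by positivity)]
  linarith

lemma div_le_div_succ (m t : ℕ) :
    ((m : ℚ) + 1 - t) / (m + 1) ≤ ((m + 1 : ℕ) + 1 - t) / ((m + 1 : ℕ) + 1) := by
  push_cast
  rw [div_le_div_iff₀ (by positivity) (by positivity)]
  nlinarith [Nat.cast_nonneg (α := ℚ) t]

lemma pow_div_mul_V_add_le (q t α m : ℕ) (ht : t ≤ m + 1) :
    (((m : ℚ) + 1 - t) / (m + 1)) ^ α * V q (m + α) t ≤ V q m t := by
  induction α generalizing m with
  | zero => simp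
  | succ α ih =>
    have ht' : (t : ℚ) ≤ m + 1 := by exact_mod_cast ht
    have hr : 0 ≤ ((m : ℚ) + 1 - t) / (m + 1) := div_nonneg (by linarith) (by positivity)
    calc (((m : ℚ) + 1 - t) / (m + 1)) ^ (α + 1) * V q (m + (α + 1)) t
        = ((m : ℚ) + 1 - t) / (m + 1) *
            ((((m : ℚ) + 1 - t) / (m + 1)) ^ α * V q (m + 1 + α) t) := by
          rw [Nat.add_right_comm, ← add_assoc, pow_succ]; ring
      _ ≤ ((m : ℚ) + 1 - t) / (m + 1) *
            (((((m + 1 : ℕ) : ℚ) + 1 - t) / ((m + 1 : ℕ) + 1)) ^ α * V q (m + 1 + α) t) := by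
          gcongr ?_ * (?_ ^ α * _)
          exact div_le_div_succ m t
      _ ≤ ((m : ℚ) + 1 - t) / (m + 1) * V q (m + 1) t := by
          gcongr
          exact ih (m + 1) (by omega)
      _ ≤ V q m t := div_mul_V_succ_le q m t ht

theorem stmt3_general (q n t α : ℕ) (h : α + t ≤ n) :
    (V q (n - α) t : ℚ) / V q n t ≥ (((n : ℚ) - α + 1 - t) / ((n : ℚ) - α + 1)) ^ α := by
  obtain ⟨m, rfl⟩ : ∃ m, n = m + α := ⟨n - α, by omega⟩
  rw [ge_iff_le, le_div_iff₀ (by exact_mod_cast V_pos q (m + α) t), Nat.add_sub_cancel]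
  push_cast
  simpa only [add_sub_cancel_right] using pow_div_mul_V_add_le q t α m (by omega)

theorem stmt3 (q n t α : ℕ) (hq : 2 ≤ q) (h : α + t ≤ n) :
    (V q (n - α) t : ℚ) / V q n t ≥ (((n : ℚ) - α + 1 - t) / ((n : ℚ) - α + 1)) ^ α :=
  stmt3_general q n t α h
end

section
/- For x, y ∈ [q]^n with Hamming distance d(x,y) = 1, the intersection of the two radius-t Hamming balls B(x,t) ∩ B(y,t) has cardinality exactly q · V_q(n−1, t−1), provided 1 ≤ t ≤ n. -/
/-- The Hamming ball of radius `r` around `x` in `[q]^n`. -/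
def ball {q n : ℕ} (x : Fin n → Fin q) (r : ℕ) : Finset (Fin n → Fin q) :=
  Finset.univ.filter (fun y => hammingDist x y ≤ r)

/-!
Let `x` and `y` differ only in coordinate `i`, and write `d'` for the Hamming distance on the
other `n - 1` coordinates. Then `d(x, z) = d'(x, z) + [x i ≠ z i]` and
`d(y, z) = d'(x, z) + [y i ≠ z i]`, and at least one of the two indicators is `1`. Hence `z` lies
in both balls of radius `t ≥ 1` iff `d'(x, z) ≤ t - 1`: the coordinate `z i` is free (`q` choices)
and the rest of `z` ranges over a ball of radius `t - 1` in `[q]^(n-1)`.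
-/

open Finset

section Hamming

lemma exists_forall_ne_eq_of_hammingDist_eq_one {ι : Type*} {β : ι → Type*} [Fintype ι]
    [∀ i, DecidableEq (β i)] {x y : ∀ i, β i} (h : hammingDist x y = 1) :
    ∃ i, x i ≠ y i ∧ ∀ j, j ≠ i → x j = y j := by
  obtain ⟨i, hi⟩ := card_eq_one.1 h
  refine ⟨i, by simpa using hi.ge (mem_singleton_self i), fun j hj => ?_⟩
  by_contra hne
  exact hj (mem_singleton.1 (hi ▸ by simpa using hne))

variable {ι α : Type*} [Fintype ι] [DecidableEq ι]

lemma card_filter_filter_ne_eq [Fintype α] [DecidableEq α] (x : ι → α) (S : Finset ι) :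
    #{z : ι → α | ({i | x i ≠ z i} : Finset ι) = S} = (Fintype.card α - 1) ^ #S := by
  have : ({z : ι → α | ({i | x i ≠ z i} : Finset ι) = S} : Finset _) =
      Fintype.piFinset fun i => if i ∈ S then univ.erase (x i) else {x i} := by
    ext z
    rw [mem_filter, Fintype.mem_piFinset, Finset.ext_iff, and_iff_right (mem_univ z)]
    refine forall_congr' fun i => ?_
    split_ifs with hi <;> simp [hi, eq_comm]
  rw [this, Fintype.card_piFinset]
  simp [apply_ite Finset.card, Finset.card_erase_of_mem, Finset.prod_ite_mem]

lemma card_filter_hammingDist_eq [Fintype α] [DecidableEq α] (x : ι → α) (j : ℕ) :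
    #{z : ι → α | hammingDist x z = j} = (Fintype.card ι).choose j * (Fintype.card α - 1) ^ j := by
  rw [card_eq_sum_card_fiberwise (f := fun z => ({i | x i ≠ z i} : Finset ι))
    (t := powersetCard j univ) (fun z hz => by simpa [hammingDist] using hz)]
  have hfiber : ∀ S ∈ powersetCard j univ,
      #{z ∈ {z : ι → α | hammingDist x z = j} | ({i | x i ≠ z i} : Finset ι) = S} =
        (Fintype.card α - 1) ^ j := by
    intro S hS
    rw [mem_powersetCard] at hS
    rw [filter_filter, ← hS.2, ← card_filter_filter_ne_eq x S]
    congr 1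
    exact filter_congr fun z _ => and_iff_right_of_imp fun h => by simp [hammingDist, h]
  rw [sum_congr rfl hfiber, sum_const, card_powersetCard, card_univ, smul_eq_mul]

lemma card_filter_hammingDist_le [Fintype α] [DecidableEq α] (x : ι → α) (r : ℕ) :
    #{z : ι → α | hammingDist x z ≤ r} =
      ∑ j ∈ range (r + 1), (Fintype.card ι).choose j * (Fintype.card α - 1) ^ j := by
  rw [card_eq_sum_card_fiberwise (f := hammingDist x) (t := range (r + 1))
    (fun z hz => by simpa [Nat.lt_succ_iff] using hz)]
  refine sum_congr rfl fun j hj => ?_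
  rw [filter_filter, ← card_filter_hammingDist_eq x j]
  congr 1
  exact filter_congr fun z _ => and_iff_right_of_imp fun h => by
    simpa [h, Nat.lt_succ_iff] using hj

lemma hammingDist_eq_add_hammingDist_restrict [DecidableEq α] (i : ι) (x z : ι → α) :
    hammingDist x z = (if x i = z i then 0 else 1) +
      hammingDist (Subtype.restrict (· ≠ i) x) (Subtype.restrict (· ≠ i) z) := by
  rw [hammingDist, hammingDist, card_filter, card_filter, Fintype.sum_eq_add_sum_subtype_ne _ i,
    ite_not]
  rfl

lemma hammingDist_le_and_hammingDist_le_iff [DecidableEq α] {x y : ι → α} {i : ι}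
    (hi : x i ≠ y i) (hxy : ∀ j, j ≠ i → x j = y j) {t : ℕ} (ht : 1 ≤ t) (z : ι → α) :
    hammingDist x z ≤ t ∧ hammingDist y z ≤ t ↔
      hammingDist (Subtype.restrict (· ≠ i) x) (Subtype.restrict (· ≠ i) z) ≤ t - 1 := by
  have hrestrict : Subtype.restrict (· ≠ i) y = Subtype.restrict (· ≠ i) x :=
    funext fun j => (hxy j j.2).symm
  rw [hammingDist_eq_add_hammingDist_restrict i x, hammingDist_eq_add_hammingDist_restrict i y,
    hrestrict]
  -- `z i` cannot agree with both `x i` and `y i`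
  by_cases hx : x i = z i
  · have hy : y i ≠ z i := fun h => hi (hx.trans h.symm)
    simp only [hx, hy, if_true, if_false]
    omega
  · split_ifs <;> omega

lemma card_filter_restrict_ne [Fintype α] (i : ι) (P : ({j // j ≠ i} → α) → Prop)
    [DecidablePred P] :
    #{z : ι → α | P (Subtype.restrict (· ≠ i) z)} = Fintype.card α * #{w | P w} := by
  rw [← card_univ, ← card_product]
  exact card_equiv (Equiv.piSplitAt i _) fun z => by simp [Equiv.piSplitAt]; rfl

end Hamming

theorem stmt6_general (q n t : ℕ) (ht : 1 ≤ t)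
    (x y : Fin n → Fin q) (hxy : hammingDist x y = 1) :
    (ball x t ∩ ball y t).card = q * V q (n - 1) (t - 1) := by
  obtain ⟨i, hi, hxy⟩ := exists_forall_ne_eq_of_hammingDist_eq_one hxy
  have hinter : ball x t ∩ ball y t =
      ({z | hammingDist (Subtype.restrict (· ≠ i) x) (Subtype.restrict (· ≠ i) z) ≤ t - 1} :
        Finset (Fin n → Fin q)) := by
    ext z
    simp only [ball, mem_inter, mem_filter, mem_univ, true_and,
      hammingDist_le_and_hammingDist_le_iff hi hxy ht]
  rw [hinter, card_filter_restrict_ne i (hammingDist (Subtype.restrict (· ≠ i) x) · ≤ t - 1),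
    card_filter_hammingDist_le, Fintype.card_fin, V]
  simp

theorem stmt6 (q n t : ℕ) (hq : 2 ≤ q) (hn : 1 ≤ n) (ht : 1 ≤ t) (htn : t ≤ n)
    (x y : Fin n → Fin q) (hxy : hammingDist x y = 1) :
    (ball x t ∩ ball y t).card = q * V q (n - 1) (t - 1) :=
  stmt6_general q n t ht x y hxy
end

section
/- Let W_q(n, t, k) denote the cardinality of the intersection of two radius-t Hamming balls in [q]^n whose centers are at Hamming distance k. Then W_q(n, t, k) is nonincreasing in k: for every 0 ≤ k ≤ t (with k+1 ≤ n), W_q(n, t, k+1) ≤ W_q(n, t, k). -/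
/-- The standard vector whose first `k` coordinates are `1` and the rest are `0`. -/
def stdVec (q n : ℕ) [NeZero q] (k : ℕ) : Fin n → Fin q :=
  fun i => if (i : ℕ) < k then 1 else 0

/-- `W q n t k`: the size of the intersection of two radius-`t` Hamming balls in `[q]^n`
whose centers are at Hamming distance `k` (for `k ≤ n` and `q ≥ 2`). -/
def W (q n : ℕ) [NeZero q] (t k : ℕ) : ℕ :=
  (ball (stdVec q n 0) t ∩ ball (stdVec q n k) t).card

/-!
Let `v` be `u` with one coordinate `j`, on which `u` agrees with `o`, changed from `a` to `b`.
Points of `B(o, r) ∩ B(v, t)` that are also in `B(u, t)` are counted on both sides. A point `z`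
that is only in `B(v, t)` has `z j = b`, and resetting that coordinate to `a` moves it one step
closer to `o` and to `u` and one step away from `v`; this injects the points in `B(v, t)` only
into those in `B(u, t)` only. The centers `stdVec q n k` and `stdVec q n (k + 1)` are such a
pair `u`, `v` with `o = stdVec q n 0` and `j = k`.
-/

open Finset Function

section Update

variable {ι : Type*} {β : ι → Type*} [Fintype ι] [DecidableEq ι] [∀ i, DecidableEq (β i)]

theorem hammingDist_update_update_add (x y : ∀ i, β i) (j : ι) (c d : β j) :
    hammingDist (update x j c) (update y j d) + (if x j ≠ y j then 1 else 0) =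
      hammingDist x y + (if c ≠ d then 1 else 0) := by
  have split_at_j : ∀ x y : ∀ i, β i, hammingDist x y =
      (if x j ≠ y j then 1 else 0) + ∑ i ∈ univ.erase j, if x i ≠ y i then 1 else 0 := by
    intro x y
    rw [hammingDist, card_filter]
    exact (add_sum_erase _ _ (mem_univ j)).symm
  have away_from_j : ∑ i ∈ univ.erase j, (if update x j c i ≠ update y j d i then 1 else 0) =
      ∑ i ∈ univ.erase j, if x i ≠ y i then 1 else 0 :=
    sum_congr rfl fun i hi => by
      rw [update_of_ne (ne_of_mem_erase hi), update_of_ne (ne_of_mem_erase hi)]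
  rw [split_at_j (update x j c), split_at_j x, update_self, update_self, away_from_j]
  omega

theorem apply_eq_and_hammingDist_update_add_one_of_lt {u z : ∀ i, β i} {j : ι} {b : β j}
    (h : hammingDist (update u j b) z < hammingDist u z) :
    z j = b ∧ hammingDist (update u j b) z + 1 = hammingDist u z := by
  have key := hammingDist_update_update_add u z j b (z j)
  rw [update_eq_self] at key
  split_ifs at key with _ hb
  · omega
  · exact ⟨(not_not.1 hb).symm, key⟩
  · omega
  · omega

end Update

theorem mem_ball {q n : ℕ} {x y : Fin n → Fin q} {r : ℕ} :
    y ∈ ball x r ↔ hammingDist x y ≤ r := by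
  simp [ball]

section MoveCenter

variable {q n : ℕ} {o u : Fin n → Fin q} {j : Fin n}

theorem card_sdiff_ball_update_le (hj : o j = u j) {b : Fin q} (hb : b ≠ u j) (r t : ℕ) :
    ((ball o r ∩ ball (update u j b) t) \ ball u t).card ≤
      ((ball o r ∩ ball u t) \ ball (update u j b) t).card := by
  have escape : ∀ z ∈ (ball o r ∩ ball (update u j b) t) \ ball u t,
      z j = b ∧ hammingDist (update u j b) z + 1 = hammingDist u z := by
    intro z hz
    simp only [mem_sdiff, mem_inter, mem_ball] at hz
    exact apply_eq_and_hammingDist_update_add_one_of_lt (by omega)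
  refine card_le_card_of_injOn (update · j (u j))
    (fun z hz => ?_) (fun z₁ hz₁ z₂ hz₂ h => ?_)
  · rw [mem_coe] at hz ⊢
    obtain ⟨hzb, hvu⟩ := escape z hz
    have reset : ∀ x c, x j = u j → hammingDist (update x j c) (update z j (u j)) + 1 =
        hammingDist x z + (if c ≠ u j then 1 else 0) := by
      intro x c hx
      rw [← hammingDist_update_update_add, hx, hzb, if_pos hb.symm]
    have ho := reset o (u j) hj
    have hu := reset u (u j) rfl
    have hv := reset u b rfl
    rw [update_eq_self_iff.2 hj.symm, if_neg (not_not.2 rfl)] at ho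
    rw [update_eq_self, if_neg (not_not.2 rfl)] at hu
    rw [if_pos hb] at hv
    simp only [mem_sdiff, mem_inter, mem_ball] at hz ⊢
    omega
  · have recover : ∀ z ∈ (ball o r ∩ ball (update u j b) t) \ ball u t,
        z = update (update z j (u j)) j b := by
      intro z hz
      rw [update_idem, ← (escape z hz).1, update_eq_self]
    rw [recover z₁ (mem_coe.1 hz₁), recover z₂ (mem_coe.1 hz₂)]
    exact congrArg (update · j b) h

theorem card_inter_ball_update_le (hj : o j = u j) (b : Fin q) (r t : ℕ) :
    (ball o r ∩ ball (update u j b) t).card ≤ (ball o r ∩ ball u t).card := by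
  obtain rfl | hb := eq_or_ne b (u j)
  · rw [update_eq_self]
  have common : ball o r ∩ ball (update u j b) t ∩ ball u t =
      ball o r ∩ ball u t ∩ ball (update u j b) t :=
    inter_right_comm _ _ _
  rw [← card_inter_add_card_sdiff _ (ball u t),
    ← card_inter_add_card_sdiff (ball o r ∩ ball u t) (ball (update u j b) t), common]
  exact Nat.add_le_add_left (card_sdiff_ball_update_le hj hb r t) _

end MoveCenter

theorem stdVec_succ (q n : ℕ) [NeZero q] {k : ℕ} (hkn : k + 1 ≤ n) :
    stdVec q n (k + 1) = update (stdVec q n k) ⟨k, hkn⟩ 1 := by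
  funext i
  by_cases hi : i = ⟨k, hkn⟩
  · subst hi
    simp [stdVec]
  · have hik : (i : ℕ) < k + 1 ↔ (i : ℕ) < k := by
      have : (i : ℕ) ≠ k := fun h => hi (Fin.ext h)
      omega
    simp only [stdVec, update_of_ne hi, hik]

theorem stmt8_general (q n t : ℕ) [NeZero q] (k : ℕ) (hkn : k + 1 ≤ n) :
    W q n t (k + 1) ≤ W q n t k := by
  rw [W, W, stdVec_succ q n hkn]
  exact card_inter_ball_update_le (by simp [stdVec]) 1 t t

theorem stmt8 (q n t : ℕ) [NeZero q] (hq : 2 ≤ q) (hn : 1 ≤ n) (k : ℕ)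
    (hkt : k ≤ t) (hkn : k + 1 ≤ n) :
    W q n t (k + 1) ≤ W q n t k :=
  stmt8_general q n t k hkn
end

section
/- For every integer k ≥ 0 with 2k+1 ≤ n and t ≥ 1, the intersection volumes satisfy W_q(n, t, 2k+1) ≤ 2·(q²t/((q−1)n))^k · W_q(n, t, 1), where W_q(n, t, j) is the size of the intersection of two radius-t Hamming balls in [q]^n at center distance j. -/
/-!
Put `D = d(u, v)` and, for a word `y`, let `A(y)` count the coordinates on which `u` and `v`
agree but `y` differs from them. Each coordinate with `u i ≠ v i` contributes at least one to
`d(u, y) + d(v, y)` and each coordinate counted by `A(y)` contributes two, while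
`d(u, y), d(v, y) ≤ D + A(y)`. So for `D = 2k + 1` the intersection of the two radius-`t` balls
lies in `{A < t - k}`, and for `D = 1` it contains `{A < t}`; both sets are counted exactly by
Hamming sphere sizes in the `n - D` agreeing coordinates, times `q ^ D`. The two binomial sums
are compared termwise by `n ^ k * C(n - 2k - 1, e) ≤ t ^ k * C(n - 1, e + k)` for `e + k < t`
and `2t ≤ n`, which is proved one factor `n / t` at a time.
-/

open Finset

section Hamming

variable {ι β : Type*} [DecidableEq β]

def hammingDistOn (s : Finset ι) (x y : ι → β) : ℕ := #{i ∈ s | x i ≠ y i}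

theorem hammingDistOn_eq_hammingDist_restrict (s : Finset ι) (x y : ι → β) :
    hammingDistOn s x y = hammingDist (fun i : s => x i) (fun i => y i) := by
  rw [hammingDistOn, hammingDist, card_filter, card_filter]
  exact sum_subtype s (fun _ => Iff.rfl) (fun i => if x i ≠ y i then 1 else 0)

variable [Fintype ι]

theorem hammingDist_add_two_mul_hammingDistOn_le (u v y : ι → β) :
    hammingDist u v + 2 * hammingDistOn {i | u i = v i} u y ≤
      hammingDist u y + hammingDist v y := by
  simp only [hammingDist, hammingDistOn, filter_filter, card_filter, mul_sum,
    ← sum_add_distrib]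
  refine sum_le_sum fun i _ => ?_
  split_ifs <;> grind

theorem hammingDist_le_add_hammingDistOn (u v y : ι → β) :
    hammingDist u y ≤ hammingDist u v + hammingDistOn {i | u i = v i} u y ∧
      hammingDist v y ≤ hammingDist u v + hammingDistOn {i | u i = v i} u y := by
  simp only [hammingDist, hammingDistOn, filter_filter, card_filter, ← sum_add_distrib]
  constructor <;> refine sum_le_sum fun i _ => ?_ <;> split_ifs <;> grind

variable [DecidableEq ι] [Fintype β]

theorem card_filter_hammingSupport_eq (x : ι → β) (T : Finset ι) :
    #{y : ι → β | ({i | x i ≠ y i} : Finset ι) = T} = (Fintype.card β - 1) ^ #T := by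
  have : ({y : ι → β | ({i | x i ≠ y i} : Finset ι) = T} : Finset (ι → β)) =
      Fintype.piFinset fun i => if i ∈ T then {x i}ᶜ else {x i} := by
    ext y
    simp only [mem_filter, mem_univ, true_and, Fintype.mem_piFinset, Finset.ext_iff]
    refine forall_congr' fun i => ?_
    split_ifs with hi <;> simp [hi, eq_comm]
  rw [this, Fintype.card_piFinset]
  simp [apply_ite card, card_compl, prod_ite_mem]

theorem card_hammingDist_eq (x : ι → β) (e : ℕ) :
    #{y : ι → β | hammingDist x y = e} =
      (Fintype.card ι).choose e * (Fintype.card β - 1) ^ e := by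
  rw [card_eq_sum_card_fiberwise (f := fun y : ι → β => ({i | x i ≠ y i} : Finset ι))
    (t := powersetCard e univ)]
  · rw [← card_univ (α := ι), ← card_powersetCard e (univ : Finset ι), card_eq_sum_ones,
      sum_mul, one_mul]
    refine sum_congr rfl fun T hT => ?_
    rw [(mem_powersetCard.1 hT).2.symm, ← card_filter_hammingSupport_eq x T, filter_filter]
    congr 1
    refine filter_congr fun y _ => ⟨And.right, fun h => ⟨?_, h⟩⟩
    rw [hammingDist, h]
  · intro y hy
    simpa [hammingDist] using hy

theorem card_hammingDist_lt (x : ι → β) (m : ℕ) :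
    #{y : ι → β | hammingDist x y < m} =
      ∑ e ∈ range m, (Fintype.card ι).choose e * (Fintype.card β - 1) ^ e := by
  rw [card_eq_sum_card_fiberwise (f := hammingDist x) (t := range m)]
  · refine sum_congr rfl fun e he => ?_
    rw [← card_hammingDist_eq x e, filter_filter]
    congr 1
    refine filter_congr fun y _ => ⟨And.right, fun h => ⟨?_, h⟩⟩
    simpa [h] using he
  · intro y hy
    simpa using hy

theorem card_hammingDistOn_lt (s : Finset ι) (x : ι → β) (m : ℕ) :
    #{y : ι → β | hammingDistOn s x y < m} =
      Fintype.card β ^ #sᶜ * ∑ e ∈ range m, (#s).choose e * (Fintype.card β - 1) ^ e := by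
  rw [card_equiv (Equiv.piEquivPiSubtypeProd (· ∈ s) fun _ => β)
    (t := ({z : s → β | hammingDist (fun i : s => x i) z < m} : Finset _) ×ˢ univ)]
  · rw [card_product, card_hammingDist_lt, card_univ, Fintype.card_pi, prod_const, card_univ,
      Fintype.card_coe, Fintype.card_subtype_compl, Fintype.card_coe, card_compl, mul_comm]
  · intro y
    simp [hammingDistOn_eq_hammingDist_restrict, Equiv.piEquivPiSubtypeProd]

theorem card_hammingDistOn_agree_lt (u v : ι → β) (m : ℕ) :
    #{y : ι → β | hammingDistOn {i | u i = v i} u y < m} =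
      Fintype.card β ^ hammingDist u v *
        ∑ e ∈ range m,
          (Fintype.card ι - hammingDist u v).choose e * (Fintype.card β - 1) ^ e := by
  have hcompl : #({i | u i = v i} : Finset ι)ᶜ = hammingDist u v := by
    rw [compl_filter]; rfl
  rw [card_hammingDistOn_lt, hcompl, ← hcompl, card_compl, Nat.sub_sub_self (card_le_univ _)]

end Hamming

theorem succ_mul_succ_mul_choose_add_two (a d : ℕ) :
    (a + 1) * (d + 1) * (a + d + 2).choose (a + 1) =
      (a + d + 1) * (a + d + 2) * (a + d).choose a := by
  have h1 := Nat.add_one_mul_choose_eq (a + d + 1) a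
  have h2 := Nat.choose_mul_succ_eq (a + d) a
  rw [show a + d + 1 - a = d + 1 by omega] at h2
  nlinarith [h1, h2]

theorem mul_choose_le_mul_choose_add_two {M a j t : ℕ} (hat : a + j < t)
    (htM : 2 * t ≤ M + 2 * j + 1) :
    (M + 2 * j + 1) * M.choose a ≤ t * (M + 2).choose (a + 1) := by
  obtain ⟨τ, rfl⟩ : ∃ τ, t = τ + j := ⟨t - j, by omega⟩
  obtain ⟨d, rfl⟩ : ∃ d, M = a + d := ⟨M - a, by omega⟩
  have hpos : 0 < (a + 1) * (d + 1) := by positivity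
  refine Nat.le_of_mul_le_mul_left ?_ hpos
  have key :
      (a + d + 2 * j + 1) * ((a + 1) * (d + 1)) ≤ (τ + j) * ((a + d + 1) * (a + d + 2)) := by
    have h1 : (a + 1) * (d + 1) ≤ τ * (a + d + 2) := Nat.mul_le_mul (by omega) (by omega)
    have h2 : 2 * (a + 1) * (d + 1) ≤ (a + d + 1) * (a + d + 2) :=
      Nat.mul_le_mul (by omega) (by omega)
    nlinarith
  calc (a + 1) * (d + 1) * ((a + d + 2 * j + 1) * (a + d).choose a)
      = (a + d + 2 * j + 1) * ((a + 1) * (d + 1)) * (a + d).choose a := by ring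
    _ ≤ (τ + j) * ((a + d + 1) * (a + d + 2)) * (a + d).choose a := by gcongr
    _ = (a + 1) * (d + 1) * ((τ + j) * (a + d + 2).choose (a + 1)) := by
      rw [mul_assoc (τ + j), ← succ_mul_succ_mul_choose_add_two]; ring

theorem pow_mul_choose_le_pow_mul_choose {n t : ℕ} (htn : 2 * t ≤ n) :
    ∀ {k M e : ℕ}, n = M + 2 * k + 1 → e + k < t →
      n ^ k * M.choose e ≤ t ^ k * (M + 2 * k).choose (e + k)
  | 0, M, e, _, _ => by simp
  | k + 1, M, e, hn, het => by
    have hstep : n * M.choose e ≤ t * (M + 2).choose (e + 1) := by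
      subst hn
      exact mul_choose_le_mul_choose_add_two (j := k + 1) het (by omega)
    have ih := pow_mul_choose_le_pow_mul_choose htn (k := k) (M := M + 2) (e := e + 1)
      (by omega) (by omega)
    calc n ^ (k + 1) * M.choose e = n ^ k * (n * M.choose e) := by ring
      _ ≤ n ^ k * (t * (M + 2).choose (e + 1)) := by gcongr
      _ = t * (n ^ k * (M + 2).choose (e + 1)) := by ring
      _ ≤ t * (t ^ k * (M + 2 + 2 * k).choose (e + 1 + k)) := by gcongr
      _ = t ^ (k + 1) * (M + 2 * (k + 1)).choose (e + (k + 1)) := by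
        rw [show M + 2 + 2 * k = M + 2 * (k + 1) by ring, show e + 1 + k = e + (k + 1) by ring]
        ring

theorem pow_mul_sum_choose_le (n t k c : ℕ) (htn : 2 * t ≤ n) (hkn : 2 * k + 1 ≤ n) :
    (c * n) ^ k * ∑ e ∈ range (t - k), (n - (2 * k + 1)).choose e * c ^ e ≤
      t ^ k * ∑ e ∈ range t, (n - 1).choose e * c ^ e := by
  rcases le_or_gt k t with hkt | htk
  · obtain ⟨m, rfl⟩ : ∃ m, t = k + m := ⟨t - k, by omega⟩
    calc (c * n) ^ k * ∑ e ∈ range (k + m - k), (n - (2 * k + 1)).choose e * c ^ e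
        = ∑ e ∈ range m, c ^ (k + e) * (n ^ k * (n - (2 * k + 1)).choose e) := by
          rw [Nat.add_sub_cancel_left, mul_sum]
          exact sum_congr rfl fun e _ => by ring
      _ ≤ ∑ e ∈ range m, c ^ (k + e) * ((k + m) ^ k * (n - 1).choose (k + e)) := by
          refine sum_le_sum fun e he => Nat.mul_le_mul_left _ ?_
          rw [show n - 1 = n - (2 * k + 1) + 2 * k by omega, add_comm k e]
          exact pow_mul_choose_le_pow_mul_choose htn (by omega) (by simp at he; omega)
      _ = (k + m) ^ k * ∑ e ∈ range m, (n - 1).choose (k + e) * c ^ (k + e) := by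
          rw [mul_sum]
          exact sum_congr rfl fun e _ => by ring
      _ ≤ (k + m) ^ k * ∑ e ∈ range (k + m), (n - 1).choose e * c ^ e := by
          rw [sum_range_add]
          exact Nat.mul_le_mul_left _ (Nat.le_add_left _ _)
  · simp [Nat.sub_eq_zero_of_le htk.le]

section Ball

variable {q n : ℕ}

theorem card_ball_inter_ball_le (u v : Fin n → Fin q) {t k : ℕ}
    (huv : hammingDist u v = 2 * k + 1) :
    #(ball u t ∩ ball v t) ≤
      q ^ (2 * k + 1) * ∑ e ∈ range (t - k), (n - (2 * k + 1)).choose e * (q - 1) ^ e := by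
  have hsub : ball u t ∩ ball v t ⊆
      ({y | hammingDistOn {i | u i = v i} u y < t - k} : Finset _) := by
    intro y hy
    simp only [ball, mem_inter, mem_filter, mem_univ, true_and] at hy ⊢
    have := hammingDist_add_two_mul_hammingDistOn_le u v y
    omega
  simpa [card_hammingDistOn_agree_lt, huv] using card_le_card hsub

theorem le_card_ball_inter_ball (u v : Fin n → Fin q) (t : ℕ) :
    q ^ hammingDist u v * ∑ e ∈ range (t + 1 - hammingDist u v),
      (n - hammingDist u v).choose e * (q - 1) ^ e ≤ #(ball u t ∩ ball v t) := by
  have hsub : ({y | hammingDistOn {i | u i = v i} u y < t + 1 - hammingDist u v} : Finset _) ⊆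
      ball u t ∩ ball v t := by
    intro y hy
    simp only [ball, mem_inter, mem_filter, mem_univ, true_and] at hy ⊢
    have := hammingDist_le_add_hammingDistOn u v y
    omega
  simpa [card_hammingDistOn_agree_lt] using card_le_card hsub

variable [NeZero q]

theorem hammingDist_stdVec_zero (hq : 2 ≤ q) {j : ℕ} (hj : j ≤ n) :
    hammingDist (stdVec q n 0) (stdVec q n j) = j := by
  simp [hammingDist, stdVec, apply_ite, show q ≠ 1 by omega, Fin.card_filter_val_lt, hj]

theorem W_odd_le (hq : 2 ≤ q) {k : ℕ} (hkn : 2 * k + 1 ≤ n) (t : ℕ) :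
    W q n t (2 * k + 1) ≤
      q ^ (2 * k + 1) * ∑ e ∈ range (t - k), (n - (2 * k + 1)).choose e * (q - 1) ^ e :=
  card_ball_inter_ball_le _ _ (hammingDist_stdVec_zero hq hkn)

theorem le_W_one (hq : 2 ≤ q) (hn : 1 ≤ n) (t : ℕ) :
    q * ∑ e ∈ range t, (n - 1).choose e * (q - 1) ^ e ≤ W q n t 1 := by
  simpa [W, hammingDist_stdVec_zero hq hn] using
    le_card_ball_inter_ball (stdVec q n 0) (stdVec q n 1) t

theorem pow_mul_W_odd_le (hq : 2 ≤ q) {t k : ℕ} (htn : 2 * t ≤ n) (hkn : 2 * k + 1 ≤ n) :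
    ((q - 1) * n) ^ k * W q n t (2 * k + 1) ≤ (q ^ 2 * t) ^ k * W q n t 1 := by
  have hodd := W_odd_le hq hkn t
  have hone := le_W_one hq (show 1 ≤ n by omega) t
  have hsums := pow_mul_sum_choose_le n t k (q - 1) htn hkn
  set F := ∑ e ∈ range (t - k), (n - (2 * k + 1)).choose e * (q - 1) ^ e
  set G := ∑ e ∈ range t, (n - 1).choose e * (q - 1) ^ e
  calc ((q - 1) * n) ^ k * W q n t (2 * k + 1)
      ≤ ((q - 1) * n) ^ k * (q ^ (2 * k + 1) * F) := by gcongr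
    _ = q ^ (2 * k + 1) * (((q - 1) * n) ^ k * F) := by ring
    _ ≤ q ^ (2 * k + 1) * (t ^ k * G) := by gcongr
    _ = (q ^ 2 * t) ^ k * (q * G) := by ring
    _ ≤ (q ^ 2 * t) ^ k * W q n t 1 := by gcongr

end Ball

theorem stmt10_general (q n t k : ℕ) [NeZero q] (hq : 2 ≤ q)
    (htn : 2 * t ≤ n) (hkn : 2 * k + 1 ≤ n) :
    (W q n t (2 * k + 1) : ℚ) ≤
      2 * ((q ^ 2 * t : ℚ) / (((q : ℚ) - 1) * n)) ^ k * W q n t 1 := by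
  have hpos : (0 : ℚ) < ((q : ℚ) - 1) * n := by
    have hq' : (2 : ℚ) ≤ q := by exact_mod_cast hq
    have hn' : (1 : ℚ) ≤ n := by exact_mod_cast (show 1 ≤ n by omega)
    exact mul_pos (by linarith) (by linarith)
  have hmain :
      (((q : ℚ) - 1) * n) ^ k * W q n t (2 * k + 1) ≤ (q ^ 2 * t : ℚ) ^ k * W q n t 1 := by
    have h := Nat.cast_le (α := ℚ).2 (pow_mul_W_odd_le hq htn hkn)
    push_cast [Nat.cast_sub (show 1 ≤ q by omega)] at h
    exact h
  calc (W q n t (2 * k + 1) : ℚ)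
      ≤ ((q ^ 2 * t : ℚ) / (((q : ℚ) - 1) * n)) ^ k * W q n t 1 := by
        rw [div_pow, div_mul_eq_mul_div, le_div_iff₀ (by positivity)]
        linarith
    _ ≤ 2 * ((q ^ 2 * t : ℚ) / (((q : ℚ) - 1) * n)) ^ k * W q n t 1 := by
        have : 0 ≤ ((q ^ 2 * t : ℚ) / (((q : ℚ) - 1) * n)) ^ k * W q n t 1 := by positivity
        linarith

theorem stmt10 (q n t k : ℕ) [NeZero q] (hq : 2 ≤ q) (hn : 2 ≤ n) (ht : 1 ≤ t)
    (htn : 2 * t ≤ n) (hkn : 2 * k + 1 ≤ n) :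
    (W q n t (2 * k + 1) : ℚ) ≤
      2 * ((q ^ 2 * t : ℚ) / (((q : ℚ) - 1) * n)) ^ k * W q n t 1 :=
  stmt10_general q n t k hq htn hkn
end

section
/- For t ≥ 1 and n ≥ 1, W_q(n, t, 1) ≤ (qt/((q−1)n))·V_q(n, t), where W_q(n, t, 1) is the size of the intersection of two radius-t Hamming balls in [q]^n at center distance 1. -/
/-!
Split a word as `a :: z`. Since the centres `0` and `e₁ = 1 :: 0` differ in the first letter only,
every first letter `a` differs from at least one of `0`, `1`; so `a :: z` lies within `t` of both
centres iff `wt z ≤ t - 1`, whatever `a` is. Hence `W_q(n, t, 1) = q · V_q(n - 1, t - 1)`, and the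
bound follows termwise from `n · C(n - 1, j - 1) = j · C(n, j) ≤ t · C(n, j)`.
-/

open Finset

section Cons

variable {α : Type*} {m : ℕ}

theorem card_filter_fin_cons [Fintype α] (P : (Fin (m + 1) → α) → Prop) [DecidablePred P] :
    #{y | P y} = ∑ a : α, #{z : Fin m → α | P (Fin.cons a z)} := by
  simp only [card_filter, ← Fintype.sum_prod_type']
  exact (Fintype.sum_equiv (Fin.consEquiv fun _ => α) _ _ fun _ => rfl).symm

theorem hammingDist_fin_cons [DecidableEq α] (a b : α) (x y : Fin m → α) :
    hammingDist (Fin.cons a x : Fin (m + 1) → α) (Fin.cons b y)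
      = (if a = b then 0 else 1) + hammingDist x y := by
  simp only [hammingDist, card_filter, Fin.sum_univ_succ, Fin.cons_zero, Fin.cons_succ,
    ne_eq, ite_not]

theorem hammingNorm_fin_cons [DecidableEq α] [Zero α] (a : α) (x : Fin m → α) :
    hammingNorm (Fin.cons a x : Fin (m + 1) → α) = (if a = 0 then 0 else 1) + hammingNorm x := by
  simp only [hammingNorm, card_filter, Fin.sum_univ_succ, Fin.cons_zero, Fin.cons_succ,
    ne_eq, ite_not]

theorem card_filter_hammingDist_fin_cons_le_and [Fintype α] [DecidableEq α] {a b : α}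
    (hab : a ≠ b) (x : Fin m → α) (t : ℕ) :
    #{y | hammingDist (Fin.cons a x : Fin (m + 1) → α) y ≤ t + 1 ∧
        hammingDist (Fin.cons b x : Fin (m + 1) → α) y ≤ t + 1}
      = Fintype.card α * #{z | hammingDist x z ≤ t} := by
  rw [card_filter_fin_cons, ← smul_eq_mul, ← card_univ, ← sum_const]
  refine sum_congr rfl fun c _ => congrArg card <| filter_congr fun z _ => ?_
  simp only [hammingDist_fin_cons]
  split_ifs with hac hbc hbc
  · exact absurd (hac.trans hbc.symm) hab
  all_goals omega

end Cons

section Sphere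

variable {α : Type*} [Fintype α] [DecidableEq α] [Zero α]

theorem card_filter_hammingNorm_eq (m j : ℕ) :
    #{y : Fin m → α | hammingNorm y = j} = m.choose j * (Fintype.card α - 1) ^ j := by
  induction m generalizing j with
  | zero => cases j <;> simp [hammingNorm]
  | succ m ih =>
    rw [card_filter_fin_cons, Fintype.sum_eq_add_sum_compl 0]
    have hne : ∀ a ∈ ({0}ᶜ : Finset α),
        #{z : Fin m → α | hammingNorm (Fin.cons a z : Fin (m + 1) → α) = j}
          = #{z : Fin m → α | hammingNorm z + 1 = j} := fun a ha => by
      simp only [hammingNorm_fin_cons, if_neg (by simpa using ha), add_comm 1]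
    rw [sum_congr rfl hne, sum_const, card_compl, card_singleton]
    simp only [hammingNorm_fin_cons, if_pos, zero_add]
    cases j with
    | zero => simpa using ih 0
    | succ j =>
      simp only [add_left_inj, ih, Nat.choose_succ_succ', smul_eq_mul]
      ring

theorem card_filter_hammingNorm_le (m t : ℕ) :
    #{y : Fin m → α | hammingNorm y ≤ t} = V (Fintype.card α) m t := by
  rw [card_eq_sum_card_fiberwise (f := hammingNorm) (t := range (t + 1))
    fun y hy => by simpa [Nat.lt_succ_iff] using hy]
  refine sum_congr rfl fun j hj => ?_
  rw [filter_filter, ← card_filter_hammingNorm_eq]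
  congr 1
  exact filter_congr fun y _ => ⟨fun h => h.2, fun h => ⟨h ▸ mem_range_succ_iff.mp hj, h⟩⟩

end Sphere

section StdVec

variable (q m : ℕ) [NeZero q]

theorem stdVec_succ_zero : stdVec q (m + 1) 0 = Fin.cons 0 0 := by
  ext i; refine Fin.cases ?_ (fun i => ?_) i <;> simp [stdVec]

theorem stdVec_succ_one : stdVec q (m + 1) 1 = Fin.cons 1 0 := by
  ext i; refine Fin.cases ?_ (fun i => ?_) i <;> simp [stdVec]

theorem W_succ_succ_one (s : ℕ) (hq : 1 < q) : W q (m + 1) (s + 1) 1 = q * V q m s := by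
  have h01 : (0 : Fin q) ≠ 1 := by simp [Fin.ext_iff, Nat.mod_eq_of_lt hq]
  rw [W, ball, ball, ← filter_and, stdVec_succ_zero, stdVec_succ_one,
    card_filter_hammingDist_fin_cons_le_and h01, hammingDist_zero_left,
    card_filter_hammingNorm_le, Fintype.card_fin]

end StdVec

theorem pred_mul_succ_mul_V_le (q m s : ℕ) :
    (q - 1) * (m + 1) * V q m s ≤ (s + 1) * V q (m + 1) (s + 1) := by
  calc (q - 1) * (m + 1) * V q m s
      = ∑ j ∈ range (s + 1), (j + 1) * ((m + 1).choose (j + 1) * (q - 1) ^ (j + 1)) := by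
        rw [V, mul_sum]
        refine sum_congr rfl fun j _ => ?_
        calc (q - 1) * (m + 1) * (m.choose j * (q - 1) ^ j)
            = ((m + 1) * m.choose j) * (q - 1) ^ (j + 1) := by ring
          _ = _ := by rw [Nat.add_one_mul_choose_eq]; ring
    _ ≤ ∑ j ∈ range (s + 1), (s + 1) * ((m + 1).choose (j + 1) * (q - 1) ^ (j + 1)) :=
        sum_le_sum fun j hj => Nat.mul_le_mul_right _ (mem_range.mp hj)
    _ ≤ (s + 1) * V q (m + 1) (s + 1) := by
        rw [← mul_sum, V, sum_range_succ' _ (s + 1)]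
        exact Nat.mul_le_mul_left _ (Nat.le_add_right _ _)

theorem stmt11_general (q n t : ℕ) [NeZero q] (hq : 2 ≤ q) (hn : 1 ≤ n) (ht : 1 ≤ t) :
    (W q n t 1 : ℚ) ≤ ((q : ℚ) * t / (((q : ℚ) - 1) * n)) * V q n t := by
  obtain ⟨m, rfl⟩ := Nat.exists_eq_add_of_le' hn
  obtain ⟨s, rfl⟩ := Nat.exists_eq_add_of_le' ht
  have hq' : (1 : ℚ) < q := by exact_mod_cast hq
  have hpos : (0 : ℚ) < ((q : ℚ) - 1) * ↑(m + 1) := mul_pos (by linarith) (by positivity)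
  have hV : ((q - 1) * (m + 1) * V q m s : ℕ) ≤ ((s + 1) * V q (m + 1) (s + 1) : ℚ) := by
    exact_mod_cast pred_mul_succ_mul_V_le q m s
  push_cast [Nat.cast_sub (by omega : 1 ≤ q)] at hV
  rw [W_succ_succ_one q m s hq, div_mul_eq_mul_div, le_div_iff₀ hpos]
  push_cast
  linarith [mul_le_mul_of_nonneg_left hV (Nat.cast_nonneg q : (0 : ℚ) ≤ q)]

theorem stmt11 (q n t : ℕ) [NeZero q] (hq : 2 ≤ q) (hn : 1 ≤ n) (ht : 1 ≤ t) (htn : t ≤ n) :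
    (W q n t 1 : ℚ) ≤ ((q : ℚ) * t / (((q : ℚ) - 1) * n)) * V q n t :=
  stmt11_general q n t hq hn ht
end

section
/- (Bounded independent-set count from a ball cover) Suppose X ⊆ [q]^n satisfies ⋃_{x ∈ X} B(x, t) = [q]^n, and S ⊆ [q]^n satisfies |B(x, t) ∩ S| ≤ M for every x ∈ X. Then the number of subsets I ⊆ S whose elements are pairwise at Hamming distance greater than 2t is at most (M + 1)^{|X|}. -/
open Finset

theorem card_le_prod_of_card_inter_le_one {ι α : Type*} [DecidableEq ι] [DecidableEq α]
    (X : Finset ι) (B : ι → Finset α) (S : Finset α) (hS : S ⊆ X.biUnion B)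
    (𝒜 : Finset (Finset α)) (h𝒜S : ∀ A ∈ 𝒜, A ⊆ S)
    (h𝒜 : ∀ A ∈ 𝒜, ∀ x ∈ X, #(B x ∩ A) ≤ 1) :
    #𝒜 ≤ ∏ x ∈ X, (#(B x ∩ S) + 1) := by
  let traces (x : ι) : Finset (Finset α) := insert ∅ ((B x ∩ S).image singleton)
  have hmaps : ∀ A ∈ 𝒜, (fun x _ => B x ∩ A) ∈ X.pi traces := by
    intro A hA
    refine mem_pi.2 fun x hx => ?_
    rcases Nat.le_one_iff_eq_zero_or_eq_one.1 (h𝒜 A hA x hx) with hempty | hsingle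
    · exact card_eq_zero.1 hempty ▸ mem_insert_self _ _
    · obtain ⟨a, hsingle⟩ := card_eq_one.1 hsingle
      have haA : a ∈ B x ∩ A := hsingle ▸ mem_singleton_self a
      refine mem_insert_of_mem (mem_image.2 ⟨a, ?_, hsingle.symm⟩)
      exact mem_inter.2 ⟨(mem_inter.1 haA).1, h𝒜S A hA (mem_inter.1 haA).2⟩
  have hrecover : ∀ A ∈ 𝒜, X.biUnion (fun x => B x ∩ A) = A := by
    intro A hA
    rw [← biUnion_inter, inter_eq_right]
    exact (h𝒜S A hA).trans hS
  have hinj : Set.InjOn (fun A x (_ : x ∈ X) => B x ∩ A) 𝒜 := by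
    intro A hA A' hA' h
    rw [← hrecover A hA, ← hrecover A' hA']
    exact biUnion_congr rfl fun x hx => congrFun (congrFun h x) hx
  calc #𝒜 ≤ #(X.pi traces) := card_le_card_of_injOn _ hmaps hinj
    _ = ∏ x ∈ X, #(traces x) := card_pi X traces
    _ ≤ ∏ x ∈ X, (#(B x ∩ S) + 1) := by
      gcongr with x
      exact (card_insert_le _ _).trans (Nat.add_le_add_right card_image_le 1)

theorem card_ball_inter_le_one {q n t : ℕ} (x : Fin n → Fin q) {I : Finset (Fin n → Fin q)}
    (hI : ∀ a ∈ I, ∀ b ∈ I, a ≠ b → 2 * t < hammingDist a b) :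
    #(ball x t ∩ I) ≤ 1 := by
  refine card_le_one.2 fun a ha b hb => by_contra fun hab => ?_
  simp only [ball, mem_inter, mem_filter, mem_univ, true_and] at ha hb
  have hfar := hI a ha.2 b hb.2 hab
  have hnear := hammingDist_triangle a x b
  rw [hammingDist_comm a x] at hnear
  omega

theorem stmt19_general (q n t M : ℕ)
    (X S : Finset (Fin n → Fin q))
    (hcover : X.biUnion (fun x => ball x t) = Finset.univ)
    (hM : ∀ x ∈ X, (ball x t ∩ S).card ≤ M) :
    (S.powerset.filter
        (fun I => ∀ a ∈ I, ∀ b ∈ I, a ≠ b → 2 * t < hammingDist a b)).card ≤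
      (M + 1) ^ X.card := by
  calc _ ≤ ∏ x ∈ X, (#(ball x t ∩ S) + 1) := by
        refine card_le_prod_of_card_inter_le_one X (ball · t) S (hcover ▸ subset_univ S) _
          (fun I hI => mem_powerset.1 (mem_filter.1 hI).1) fun I hI x _ => ?_
        exact card_ball_inter_le_one x (mem_filter.1 hI).2
    _ ≤ (M + 1) ^ #X := prod_le_pow_card X _ _ fun x hx => Nat.add_le_add_right (hM x hx) 1

theorem stmt19 (q n t M : ℕ) (hq : 2 ≤ q) (hn : 1 ≤ n)
    (X S : Finset (Fin n → Fin q))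
    (hcover : X.biUnion (fun x => ball x t) = Finset.univ)
    (hM : ∀ x ∈ X, (ball x t ∩ S).card ≤ M) :
    (S.powerset.filter
        (fun I => ∀ a ∈ I, ∀ b ∈ I, a ≠ b → 2 * t < hammingDist a b)).card ≤
      (M + 1) ^ X.card :=
  stmt19_general q n t M X S hcover hM
end
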